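/- arXiv:2302.06265 — 4 statements merged into one kernel-verified Lean document; each statement's English description precedes it below -/
import Mathlib

section
/- Let T₁(φ), T₂(γ), T₃(χ) be the rotation matrices about the x-, y-, z-axes respectively, and let R_BI = T₁(φ)T₂(θ)T₃(ψ) and R_NI = T₂(γ)T₃(χ). If the vector v^N = (𝚟, 0, 0) with 𝚟 > 0 satisfies R_BI R_NIᵀ v^N = (𝚟, 0, 0), and θ, γ ∈ (−π/2, π/2), ψ − χ ∈ (−π, π), then ψ = χ and θ = γ. -/
open Real Matrix
noncomputable def T1 (φ : ℝ) : Matrix (Fin 3) (Fin 3) ℝ :=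
  !![1, 0, 0; 0, Real.cos φ, Real.sin φ; 0, -Real.sin φ, Real.cos φ]
noncomputable def T2 (θ : ℝ) : Matrix (Fin 3) (Fin 3) ℝ :=
  !![Real.cos θ, 0, -Real.sin θ; 0, 1, 0; Real.sin θ, 0, Real.cos θ]
noncomputable def T3 (ψ : ℝ) : Matrix (Fin 3) (Fin 3) ℝ :=
  !![Real.cos ψ, Real.sin ψ, 0; -Real.sin ψ, Real.cos ψ, 0; 0, 0, 1]
theorem stmt1 (φ θ ψ γ χ vm : ℝ) (hv : 0 < vm)
    (hθ : θ ∈ Set.Ioo (-(π / 2)) (π / 2)) (hγ : γ ∈ Set.Ioo (-(π / 2)) (π / 2))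
    (hψχ : ψ - χ ∈ Set.Ioo (-π) π)
    (h : (T1 φ * T2 θ * T3 ψ * (T2 γ * T3 χ)ᵀ).mulVec ![vm, 0, 0] = ![vm, 0, 0]) :
    ψ = χ ∧ θ = γ := by
  obtain ⟨hψχ1, hψχ2⟩ := hψχ
  have hcθ : 0 < Real.cos θ := Real.cos_pos_of_mem_Ioo hθ
  have hcγ : 0 < Real.cos γ := Real.cos_pos_of_mem_Ioo hγ
  obtain ⟨hθ1, hθ2⟩ := hθ
  obtain ⟨hγ1, hγ2⟩ := hγ
  have h0 := congrFun h 0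
  simp [T1, T2, T3, mulVec, dotProduct, Fin.sum_univ_three, Matrix.mul_apply,
    Matrix.transpose_apply] at h0
  have key : Real.cos θ * Real.cos γ * Real.cos (ψ - χ) + Real.sin θ * Real.sin γ = 1 := by
    have h1 : (Real.cos θ * Real.cos γ * Real.cos (ψ - χ) + Real.sin θ * Real.sin γ) * vm
        = 1 * vm := by
      rw [Real.cos_sub]; ring_nf; ring_nf at h0; linarith
    exact mul_right_cancel₀ (ne_of_gt hv) h1
  have hΔ1 : Real.cos (ψ - χ) ≤ 1 := Real.cos_le_one _
  have hθγ1 : Real.cos (θ - γ) ≤ 1 := Real.cos_le_one _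
  have hcsub : Real.cos (θ - γ) = Real.cos θ * Real.cos γ + Real.sin θ * Real.sin γ :=
    Real.cos_sub θ γ
  have hΔeq : Real.cos (ψ - χ) = 1 := by
    refine le_antisymm hΔ1 ?_
    nlinarith [mul_pos hcθ hcγ]
  have hθγeq : Real.cos (θ - γ) = 1 := by
    rw [hΔeq, mul_one] at key; linarith
  have hpi := Real.pi_pos
  constructor
  · have := (Real.cos_eq_one_iff_of_lt_of_lt (x := ψ - χ) (by linarith) (by linarith)).mp hΔeq
    linarith
  · have := (Real.cos_eq_one_iff_of_lt_of_lt (x := θ - γ) (by linarith) (by linarith)).mp hθγeq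
    linarith
end

section
/- (Coordinated manoeuvre roll formula.) Suppose a = T₁(φ)·a^N where a^N = (a_x^N, a_y^N, a_z^N) ∈ ℝ³, a = (a_x, a_y, a_z), φ ∈ (−π/2, π/2), and a_y^N a_y + a_z^N a_z > 0. Then φ = arctan( (a_z^N a_y − a_y^N a_z) / (a_y^N a_y + a_z^N a_z) ). -/
open Real Matrix

theorem stmt2 (φ : ℝ) (a aN : Fin 3 → ℝ)
    (hφ : φ ∈ Set.Ioo (-(π / 2)) (π / 2))
    (ha : a = (T1 φ).mulVec aN)
    (hden : 0 < aN 1 * a 1 + aN 2 * a 2) :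
    φ = Real.arctan ((aN 2 * a 1 - aN 1 * a 2) / (aN 1 * a 1 + aN 2 * a 2)) := by
  obtain ⟨h1, h2⟩ := hφ
  have ha1 : a 1 = Real.cos φ * aN 1 + Real.sin φ * aN 2 := by
    simp [ha, T1, mulVec, dotProduct, Fin.sum_univ_three]
  have ha2 : a 2 = -Real.sin φ * aN 1 + Real.cos φ * aN 2 := by
    simp [ha, T1, mulVec, dotProduct, Fin.sum_univ_three]
  set s := aN 1 ^ 2 + aN 2 ^ 2 with hs
  have hnum : aN 2 * a 1 - aN 1 * a 2 = Real.sin φ * s := by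
    rw [ha1, ha2, hs]; ring
  have hden' : aN 1 * a 1 + aN 2 * a 2 = Real.cos φ * s := by
    rw [ha1, ha2, hs]; ring
  have hcos : 0 < Real.cos φ := Real.cos_pos_of_mem_Ioo ⟨h1, h2⟩
  have hspos : 0 < s := by
    by_contra h
    push_neg at h
    nlinarith [hden'.symm ▸ hden]
  rw [hnum, hden']
  have : Real.sin φ * s / (Real.cos φ * s) = Real.tan φ := by
    rw [Real.tan_eq_sin_div_cos]
    field_simp
  rw [this, Real.arctan_tan h1 h2]
end

section
/- Let θ̄ ∈ [0, π/2). For a unit quaternion q = (q₀, q_x, q_y, q_z), the roll angle of the associated ZYX Euler parametrization is φ(q) = atan2(2(q₀q_x + q_yq_z), 1 − 2(q_x² + q_y²)), and the pitch is θ(q) = arcsin(2(q₀q_y − q_xq_z)). On the set of unit quaternions with |θ(q)| ≤ θ̄ (and away from the atan2 branch cut, i.e., 1 − 2(q_x²+q_y²) and 2(q₀q_x+q_yq_z) not both in the closed negative-x half-line), φ is differentiable and its gradient satisfies ‖∇φ(q)‖ ≤ √2 / cos θ̄ (up to a universal constant); consequently φ is locally Lipschitz there with Lipschitz constant depending only on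 θ̄. -/
open Real

noncomputable def rollOf (q : EuclideanSpace ℝ (Fin 4)) : ℝ :=
  Complex.arg (Complex.ofReal (1 - 2 * ((q 1) ^ 2 + (q 2) ^ 2)) +
    Complex.ofReal (2 * (q 0 * q 1 + q 2 * q 3)) * Complex.I)

noncomputable def pitchOf (q : EuclideanSpace ℝ (Fin 4)) : ℝ :=
  Real.arcsin (2 * (q 0 * q 2 - q 1 * q 3))

/-!
The roll angle is the argument of the complex number `z(q)` built from two entries of the third
row of the rotation matrix of `q`; the remaining entry of that row is `-sin θ`, so for a unit
quaternion the row being a unit vector gives `|z(q)| = cos θ ≥ cos θ̄`. The derivative of `arg`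
at `z` has norm `1 / |z|`, and the derivative of the polynomial map `z` is bounded on the
compact unit sphere, so the chain rule gives a bound of order `1 / cos θ̄`.
-/

section

open Complex

variable {E : Type*} [NormedAddCommGroup E] [NormedSpace ℝ E] {f : E → ℂ} {x : E}

theorem HasFDerivAt.arg {f' : E →L[ℝ] ℂ} (hf : HasFDerivAt f f' x) (hx : f x ∈ slitPlane) :
    HasFDerivAt (fun y => arg (f y)) (imCLM.comp ((f x)⁻¹ • f')) x := by
  have hlog := ((hasStrictDerivAt_log hx).hasDerivAt.hasFDerivAt.restrictScalars ℝ).comp x hf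
  simp only [← log_im]
  refine (imCLM.hasFDerivAt.comp x hlog).congr_fderiv ?_
  ext v
  simp [mul_comm]

theorem DifferentiableAt.arg (hf : DifferentiableAt ℝ f x) (hx : f x ∈ slitPlane) :
    DifferentiableAt ℝ (fun y => arg (f y)) x :=
  (hf.hasFDerivAt.arg hx).differentiableAt

theorem norm_fderiv_arg_le (hf : DifferentiableAt ℝ f x) (hx : f x ∈ slitPlane) :
    ‖fderiv ℝ (fun y => arg (f y)) x‖ ≤ ‖fderiv ℝ f x‖ / ‖f x‖ := by
  rw [(hf.hasFDerivAt.arg hx).fderiv]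
  calc ‖imCLM.comp ((f x)⁻¹ • fderiv ℝ f x)‖
      ≤ ‖imCLM‖ * ‖(f x)⁻¹ • fderiv ℝ f x‖ := imCLM.opNorm_comp_le _
    _ = ‖fderiv ℝ f x‖ / ‖f x‖ := by rw [imCLM_norm, norm_smul, norm_inv]; ring

end

/-- For a unit quaternion this is `cos θ · exp (i φ)`; `rollOf` is its argument by definition. -/
noncomputable def rollPhasor (q : EuclideanSpace ℝ (Fin 4)) : ℂ :=
  Complex.ofReal (1 - 2 * ((q 1) ^ 2 + (q 2) ^ 2)) +
    Complex.ofReal (2 * (q 0 * q 1 + q 2 * q 3)) * Complex.I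

@[simp] theorem rollPhasor_re (q : EuclideanSpace ℝ (Fin 4)) :
    (rollPhasor q).re = 1 - 2 * (q 1 ^ 2 + q 2 ^ 2) := by simp [rollPhasor, -Complex.ofReal_pow]

@[simp] theorem rollPhasor_im (q : EuclideanSpace ℝ (Fin 4)) :
    (rollPhasor q).im = 2 * (q 0 * q 1 + q 2 * q 3) := by simp [rollPhasor, -Complex.ofReal_pow]

theorem contDiff_rollPhasor : ContDiff ℝ 1 rollPhasor := by
  have hofReal : ContDiff ℝ 1 ((↑) : ℝ → ℂ) := Complex.ofRealCLM.contDiff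
  unfold rollPhasor
  fun_prop

theorem norm_rollPhasor {q : EuclideanSpace ℝ (Fin 4)} (hq : ‖q‖ = 1) :
    ‖rollPhasor q‖ = cos (pitchOf q) := by
  have hsum : q 0 ^ 2 + q 1 ^ 2 + q 2 ^ 2 + q 3 ^ 2 = 1 := by
    simpa [EuclideanSpace.real_norm_sq_eq, Fin.sum_univ_four, hq] using
      (EuclideanSpace.real_norm_sq_eq q).symm
  rw [pitchOf, cos_arcsin, Complex.norm_eq_sqrt_sq_add_sq, rollPhasor_re, rollPhasor_im]
  congr 1
  linear_combination (4 * (q 1 ^ 2 + q 2 ^ 2)) * hsum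

theorem exists_norm_fderiv_rollPhasor_le :
    ∃ C, ∀ q : EuclideanSpace ℝ (Fin 4), ‖q‖ = 1 → ‖fderiv ℝ rollPhasor q‖ ≤ C := by
  obtain ⟨C, hC⟩ :=
    (isCompact_sphere (0 : EuclideanSpace ℝ (Fin 4)) 1).exists_bound_of_continuousOn
      (contDiff_rollPhasor.continuous_fderiv one_ne_zero).continuousOn
  exact ⟨C, fun q hq => hC q (mem_sphere_zero_iff_norm.2 hq)⟩

theorem stmt14 (θbar : ℝ) (hθ : θbar ∈ Set.Ico 0 (π / 2)) :
    ∃ c : ℝ, 0 < c ∧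
      ∀ q : EuclideanSpace ℝ (Fin 4), ‖q‖ = 1 →
        |pitchOf q| ≤ θbar →
        ¬(2 * (q 0 * q 1 + q 2 * q 3) = 0 ∧ 1 - 2 * ((q 1) ^ 2 + (q 2) ^ 2) ≤ 0) →
        DifferentiableAt ℝ rollOf q ∧
          ‖fderiv ℝ rollOf q‖ ≤ c * (Real.sqrt 2 / Real.cos θbar) := by
  obtain ⟨C, hC⟩ := exists_norm_fderiv_rollPhasor_le
  have hcos : 0 < cos θbar := cos_pos_of_mem_Ioo ⟨by linarith [hθ.1, pi_pos], hθ.2⟩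
  refine ⟨max C 1, by positivity, fun q hq hpitch hslit => ?_⟩
  have hslit' : rollPhasor q ∈ Complex.slitPlane := by
    rw [Complex.mem_slitPlane_iff, rollPhasor_re, rollPhasor_im]
    contrapose! hslit
    exact hslit.symm
  have hdiff := contDiff_rollPhasor.differentiable one_ne_zero q
  have hnorm : cos θbar ≤ ‖rollPhasor q‖ := by
    rw [norm_rollPhasor hq, ← cos_abs (pitchOf q)]
    exact cos_le_cos_of_nonneg_of_le_pi (abs_nonneg _) (by linarith [hθ.2, pi_pos]) hpitch
  refine ⟨hdiff.arg hslit', ?_⟩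
  calc ‖fderiv ℝ rollOf q‖ ≤ ‖fderiv ℝ rollPhasor q‖ / ‖rollPhasor q‖ :=
        norm_fderiv_arg_le hdiff hslit'
    _ ≤ max C 1 / cos θbar := by
      gcongr
      exact (hC q hq).trans (le_max_left _ _)
    _ ≤ max C 1 * (√2 / cos θbar) := by
      rw [mul_div_assoc']
      gcongr
      exact le_mul_of_one_le_right (by positivity) one_lt_sqrt_two.le
end

section
/- (Nonsingularity of the reduced Riccati solution.) Let X : ℝ≥0 → ℝ^{4×4} be continuous and bounded, R : ℝ≥0 → ℝ^{4×4} continuous with R(t) ≽ r I for some r > 0, and ε > 0. Suppose P : ℝ≥0 → ℝ^{4×4} is a symmetric solution of the Riccati differential equation Ṗ = X(t)P + PXᵀ(t) − P R(t)⁻¹ P + εI with P(0) ≽ 0. Then P(t) is positive definite (in particular nonsingular) for every t > 0. -/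
/-!
With `A = X - ½ P R⁻¹`, the symmetry of `P` and `R` turns the Riccati equation into the Lyapunov
equation `Ṗ = A P + P Aᵀ + ε I`. Given `t > 0` and `w ≠ 0`, solve the adjoint equation
`ψ' = -Aᵀ ψ` backwards from `ψ t = w`. Then `(ψᵀ P ψ)' = ε ψᵀ ψ` is nonnegative on `[0, t]` and
positive near `t`, so `wᵀ P(t) w > ψ(0)ᵀ P(0) ψ(0) ≥ 0`.
-/

open Matrix Set Filter Topology NNReal

section LinearODE

variable {E : Type*} [NormedAddCommGroup E] [NormedSpace ℝ E] {ρ : ℝ}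

noncomputable def radialRetraction (ρ : ℝ) (x : E) : E := min 1 (ρ / ‖x‖) • x

lemma min_one_div_mul_eq_min {a : ℝ} (hρ : 0 ≤ ρ) (ha : 0 ≤ a) :
    min 1 (ρ / a) * a = min a ρ := by
  rcases ha.eq_or_lt with rfl | ha
  · simp [hρ]
  · rw [min_mul_of_nonneg _ _ ha.le, one_mul, div_mul_cancel₀ _ ha.ne']

lemma norm_radialRetraction (hρ : 0 ≤ ρ) (x : E) : ‖radialRetraction ρ x‖ = min ‖x‖ ρ := by
  rw [radialRetraction, norm_smul, Real.norm_of_nonneg (by positivity),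
    min_one_div_mul_eq_min hρ (norm_nonneg x)]

lemma radialRetraction_of_norm_le {x : E} (h : ‖x‖ ≤ ρ) : radialRetraction ρ x = x := by
  rcases eq_or_ne x 0 with rfl | hx
  · simp [radialRetraction]
  · rw [radialRetraction, min_eq_left ((one_le_div (norm_pos_iff.2 hx)).2 h), one_smul]

lemma dist_radialRetraction_le_of_norm_le (hρ : 0 ≤ ρ) {x y : E} (hyx : ‖y‖ ≤ ‖x‖) :
    dist (radialRetraction ρ x) (radialRetraction ρ y) ≤ 2 * dist x y := by
  set c := min 1 (ρ / ‖x‖)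
  set d := min 1 (ρ / ‖y‖)
  have hc : 0 ≤ c := by positivity
  have hcx : c * ‖x‖ = min ‖x‖ ρ := min_one_div_mul_eq_min hρ (norm_nonneg x)
  have hdy : d * ‖y‖ = min ‖y‖ ρ := min_one_div_mul_eq_min hρ (norm_nonneg y)
  have hcy : c * ‖y‖ ≤ d * ‖y‖ := by
    rw [hdy]
    refine le_min (mul_le_of_le_one_left (norm_nonneg y) (min_le_left _ _)) ?_
    calc c * ‖y‖ ≤ c * ‖x‖ := by gcongr
      _ ≤ ρ := hcx ▸ min_le_right _ _
  have hdx : d * ‖y‖ ≤ c * ‖x‖ := by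
    rw [hcx, hdy]
    exact min_le_min_right ρ hyx
  have hsplit : radialRetraction ρ x - radialRetraction ρ y = c • (x - y) + (c - d) • y := by
    simp only [radialRetraction, c, d, smul_sub, sub_smul]
    abel
  rw [dist_eq_norm, dist_eq_norm, hsplit]
  calc ‖c • (x - y) + (c - d) • y‖ ≤ c * ‖x - y‖ + (d * ‖y‖ - c * ‖y‖) := by
        refine (norm_add_le _ _).trans_eq ?_
        rw [norm_smul, norm_smul, Real.norm_of_nonneg hc, Real.norm_eq_abs, ← abs_norm y,
          ← abs_mul, abs_of_nonpos (by linarith), abs_norm]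
        ring
    _ ≤ c * ‖x - y‖ + c * ‖x - y‖ := by
        gcongr
        nlinarith [norm_sub_norm_le x y]
    _ ≤ 2 * ‖x - y‖ := by nlinarith [norm_nonneg (x - y), min_le_left 1 (ρ / ‖x‖)]

lemma lipschitzWith_radialRetraction (hρ : 0 ≤ ρ) :
    LipschitzWith 2 (radialRetraction ρ : E → E) := by
  refine LipschitzWith.of_dist_le_mul fun x y => ?_
  rcases le_total ‖y‖ ‖x‖ with h | h
  · exact dist_radialRetraction_le_of_norm_le hρ h
  · rw [dist_comm, dist_comm x]
    exact dist_radialRetraction_le_of_norm_le hρ h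

variable [CompleteSpace E]

theorem exists_eq_forall_mem_Icc_hasDerivWithinAt_clm_apply_left
    {M : ℝ → E →L[ℝ] E} {a b : ℝ} (hab : a ≤ b) (hM : ContinuousOn M (Icc a b)) (x₀ : E) :
    ∃ α : ℝ → E, α a = x₀ ∧ ∀ t ∈ Icc a b, HasDerivWithinAt α (M t (α t)) (Icc a b) t := by
  obtain ⟨C, hC⟩ := isCompact_Icc.exists_bound_of_continuousOn hM
  set κ : ℝ≥0 := C.toNNReal
  have hMκ : ∀ t ∈ Icc a b, ‖M t‖ ≤ κ := fun t ht => (hC t ht).trans (Real.le_coe_toNNReal C)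
  -- Picard–Lindelöf is local; truncating the field by `radialRetraction ρ` makes it bounded, and by
  -- Grönwall the solution never leaves the ball of radius `ρ`, where the truncation is inactive.
  set ρ := ‖x₀‖ * Real.exp (κ * (b - a))
  have hρ : 0 ≤ ρ := by positivity
  set v : ℝ → E → E := fun t x => M t (radialRetraction ρ x)
  have hv : ∀ t ∈ Icc a b, ∀ x, ‖v t x‖ ≤ κ * ‖x‖ := fun t ht x =>
    ((M t).le_opNorm _).trans (mul_le_mul (hMκ t ht)
      ((norm_radialRetraction hρ x).trans_le (min_le_left _ _)) (norm_nonneg _) κ.2)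
  have hPL : IsPicardLindelof v (tmin := a) (tmax := b) ⟨a, left_mem_Icc.2 hab⟩ x₀
      ⟨κ * ρ * (b - a), by have := sub_nonneg.2 hab; positivity⟩ 0
      ⟨κ * ρ, by positivity⟩ (κ * 2) := {
    lipschitzOnWith := fun t ht => (((M t).lipschitz.weaken (by exact_mod_cast hMκ t ht)).comp
      (lipschitzWith_radialRetraction hρ)).lipschitzOnWith
    continuousOn := fun x _ => hM.clm_apply continuousOn_const
    norm_le := fun t ht x _ => ((M t).le_opNorm _).trans (mul_le_mul (hMκ t ht)
      ((norm_radialRetraction hρ x).trans_le (min_le_right _ _)) (norm_nonneg _) κ.2)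
    mul_max_le := by
      simp only [sub_self, max_eq_left (sub_nonneg.2 hab), coe_zero, sub_zero]
      rfl }
  obtain ⟨α, hα₀, hα⟩ := hPL.exists_eq_forall_mem_Icc_hasDerivWithinAt₀
  have hαρ : ∀ t ∈ Icc a b, ‖α t‖ ≤ ρ := by
    intro t ht
    have := norm_le_gronwallBound_of_norm_deriv_right_le (fun s hs => (hα s hs).continuousWithinAt)
      (fun s hs => (hα s (Ico_subset_Icc_self hs)).mono_of_mem_nhdsWithin
        (Icc_mem_nhdsGE_of_mem hs)) (le_of_eq (congrArg norm hα₀))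
      (fun s hs => (hv s (Ico_subset_Icc_self hs) (α s)).trans_eq (add_zero _).symm) t ht
    rw [gronwallBound_ε0] at this
    refine this.trans (mul_le_mul_of_nonneg_left ?_ (norm_nonneg x₀))
    gcongr
    exact ht.2
  refine ⟨α, hα₀, fun t ht => ?_⟩
  simpa only [v, radialRetraction_of_norm_le (hαρ t ht)] using hα t ht

theorem exists_eq_forall_mem_Icc_hasDerivWithinAt_clm_apply_right
    {M : ℝ → E →L[ℝ] E} {a b : ℝ} (hab : a ≤ b) (hM : ContinuousOn M (Icc a b)) (x₁ : E) :
    ∃ α : ℝ → E, α b = x₁ ∧ ∀ t ∈ Icc a b, HasDerivWithinAt α (M t (α t)) (Icc a b) t := by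
  have hrefl : MapsTo (fun t => a + b - t) (Icc a b) (Icc a b) := fun t ht =>
    ⟨by linarith [ht.2], by linarith [ht.1]⟩
  obtain ⟨β, hβ₀, hβ⟩ := exists_eq_forall_mem_Icc_hasDerivWithinAt_clm_apply_left hab
    (M := fun t => -M (a + b - t)) (hM.comp (by fun_prop) hrefl).neg x₁
  refine ⟨fun t => β (a + b - t), by simpa using hβ₀, fun t ht => ?_⟩
  simpa [Function.comp_def] using (hβ _ (hrefl ht)).scomp t
    ((hasDerivAt_id t).const_sub (a + b)).hasDerivWithinAt hrefl

end LinearODE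

lemma lt_of_hasDerivWithinAt_of_nonneg_of_eventually_pos {f f' : ℝ → ℝ} {a b : ℝ} (hab : a < b)
    (hf : ∀ x ∈ Icc a b, HasDerivWithinAt f (f' x) (Icc a b) x)
    (hf'₀ : ∀ x ∈ Icc a b, 0 ≤ f' x) (hf'pos : ∀ᶠ x in 𝓝[Icc a b] b, 0 < f' x) :
    f a < f b := by
  rw [nhdsWithin_Icc_eq_nhdsLE hab] at hf'pos
  obtain ⟨l, hlb, hl⟩ := mem_nhdsLE_iff_exists_Icc_subset.1 hf'pos
  set c := max a l
  have hac : a ≤ c := le_max_left _ _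
  have hcb : c < b := max_lt hab hlb
  have hderiv : ∀ {u v}, a ≤ u → v ≤ b → ∀ x ∈ interior (Icc u v),
      HasDerivWithinAt f (f' x) (interior (Icc u v)) x := fun hu hv x hx =>
    (hf x (Icc_subset_Icc hu hv (interior_subset hx))).mono
      (interior_subset.trans (Icc_subset_Icc hu hv))
  have hcont : ContinuousOn f (Icc a b) := fun x hx => (hf x hx).continuousWithinAt
  have hmono : MonotoneOn f (Icc a c) :=
    monotoneOn_of_hasDerivWithinAt_nonneg (convex_Icc a c)
      (hcont.mono (Icc_subset_Icc le_rfl hcb.le)) (hderiv le_rfl hcb.le) fun x hx =>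
        hf'₀ x (Icc_subset_Icc le_rfl hcb.le (interior_subset hx))
  have hstrict : StrictMonoOn f (Icc c b) :=
    strictMonoOn_of_hasDerivWithinAt_pos (convex_Icc c b)
      (hcont.mono (Icc_subset_Icc hac le_rfl)) (hderiv hac le_rfl) fun x hx =>
        hl (Icc_subset_Icc (le_max_right _ _) le_rfl (interior_subset hx))
  calc f a ≤ f c := hmono (left_mem_Icc.2 hac) (right_mem_Icc.2 hac) hac
    _ < f b := hstrict (left_mem_Icc.2 hcb.le) (right_mem_Icc.2 hcb.le) hcb

section Lyapunov

variable {n : Type*} [Fintype n]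

lemma HasDerivWithinAt.dotProduct_mulVec {ψ : ℝ → n → ℝ} {ψ' : n → ℝ} {P : ℝ → Matrix n n ℝ}
    {P' : Matrix n n ℝ} {S : Set ℝ} {t : ℝ} (hψ : HasDerivWithinAt ψ ψ' S t)
    (hP : ∀ i j, HasDerivWithinAt (fun s => P s i j) (P' i j) S t) :
    HasDerivWithinAt (fun s => ψ s ⬝ᵥ (P s *ᵥ ψ s))
      (ψ' ⬝ᵥ (P t *ᵥ ψ t) + ψ t ⬝ᵥ (P' *ᵥ ψ t) + ψ t ⬝ᵥ (P t *ᵥ ψ')) S t := by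
  have hψi := hasDerivWithinAt_pi.1 hψ
  simp only [dotProduct, mulVec, Finset.mul_sum, ← Finset.sum_add_distrib]
  exact HasDerivWithinAt.fun_sum fun i _ => HasDerivWithinAt.fun_sum fun j _ =>
    ((hψi i).fun_mul ((hP i j).fun_mul (hψi j))).congr_deriv (by ring)

lemma dotProduct_mulVec_lyapunov_adjoint (A P Q : Matrix n n ℝ) (x : n → ℝ) :
    (-Aᵀ *ᵥ x) ⬝ᵥ (P *ᵥ x) + x ⬝ᵥ ((A * P + P * Aᵀ + Q) *ᵥ x) + x ⬝ᵥ (P *ᵥ (-Aᵀ *ᵥ x)) =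
      x ⬝ᵥ (Q *ᵥ x) := by
  simp only [add_mulVec, ← mulVec_mulVec, dotProduct_add, neg_mulVec, neg_dotProduct, mulVec_neg,
    dotProduct_neg, dotProduct_mulVec _ A, mulVec_transpose]
  ring

theorem Matrix.PosDef.of_hasDerivWithinAt_lyapunov {A P Q : ℝ → Matrix n n ℝ} {t : ℝ}
    (ht : 0 < t) (hA : ContinuousOn A (Icc 0 t))
    (hP : ∀ s ∈ Icc 0 t, ∀ i j, HasDerivWithinAt (fun u => P u i j)
      ((A s * P s + P s * (A s)ᵀ + Q s) i j) (Icc 0 t) s)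
    (hQ : ∀ s ∈ Icc 0 t, (Q s).PosDef) (hP0 : (P 0).PosSemidef) (hPt : (P t).IsHermitian) :
    (P t).PosDef := by
  refine .of_dotProduct_mulVec_pos hPt fun w hw => ?_
  rw [star_trivial]
  set M : ℝ → (n → ℝ) →L[ℝ] (n → ℝ) := fun s =>
    LinearMap.toContinuousLinearMap (-(A s)ᵀ).mulVecLin
  have hM : ContinuousOn M (Icc 0 t) := by
    refine continuousOn_clm_apply.2 fun x => ?_
    exact (continuous_id.matrix_transpose.neg.matrix_mulVec continuous_const).comp_continuousOn hA
  obtain ⟨ψ, hψt, hψ⟩ := exists_eq_forall_mem_Icc_hasDerivWithinAt_clm_apply_right ht.le hM w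
  set φ := fun s => ψ s ⬝ᵥ (P s *ᵥ ψ s)
  have hφ : ∀ s ∈ Icc 0 t, HasDerivWithinAt φ (ψ s ⬝ᵥ (Q s *ᵥ ψ s)) (Icc 0 t) s := fun s hs => by
    have := (hψ s hs).dotProduct_mulVec (hP s hs)
    rwa [LinearMap.coe_toContinuousLinearMap', mulVecLin_apply,
      dotProduct_mulVec_lyapunov_adjoint] at this
  have hψne : ∀ᶠ s in 𝓝[Icc 0 t] t, s ∈ Icc 0 t ∧ ψ s ≠ 0 :=
    (eventually_mem_nhdsWithin (a := t)).and
      ((hψ t (right_mem_Icc.2 ht.le)).continuousWithinAt.eventually_ne (hψt ▸ hw))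
  have hlt := lt_of_hasDerivWithinAt_of_nonneg_of_eventually_pos ht hφ
    (fun s hs => by simpa using (hQ s hs).posSemidef.dotProduct_mulVec_nonneg (ψ s))
    (hψne.mono fun s hs => by simpa using (hQ s hs.1).dotProduct_mulVec_pos hs.2)
  calc 0 ≤ φ 0 := by simpa using hP0.dotProduct_mulVec_nonneg (ψ 0)
    _ < φ t := hlt
    _ = w ⬝ᵥ (P t *ᵥ w) := by rw [← hψt]

end Lyapunov

lemma Matrix.PosDef.of_posSemidef_sub_smul_one {n : Type*} [DecidableEq n] {R : Matrix n n ℝ}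
    {r : ℝ} (hr : 0 < r) (h : (R - r • 1).PosSemidef) : R.PosDef := by
  simpa using PosDef.posSemidef_add h (PosDef.one.smul hr)

lemma riccati_eq_lyapunov {n : Type*} [Fintype n] {X P S : Matrix n n ℝ} (hP : P.IsSymm)
    (hS : S.IsSymm) :
    X * P + P * Xᵀ - P * S * P =
      (X - (2⁻¹ : ℝ) • (P * S)) * P + P * (X - (2⁻¹ : ℝ) • (P * S))ᵀ := by
  rw [transpose_sub, transpose_smul, transpose_mul, hP.eq, hS.eq, sub_mul, mul_sub, smul_mul,
    Matrix.mul_smul, ← Matrix.mul_assoc]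
  module

theorem stmt17_general (X : ℝ → Matrix (Fin 4) (Fin 4) ℝ) (R : ℝ → Matrix (Fin 4) (Fin 4) ℝ)
    (P : ℝ → Matrix (Fin 4) (Fin 4) ℝ) (r ε : ℝ) (hr : 0 < r) (hε : 0 < ε)
    (hXcont : ∀ i j, Continuous fun t => X t i j)
    (hRcont : ∀ i j, Continuous fun t => R t i j)
    (hRlb : ∀ t : ℝ, 0 ≤ t → (R t - r • (1 : Matrix (Fin 4) (Fin 4) ℝ)).PosSemidef)
    (hPsymm : ∀ t : ℝ, 0 ≤ t → (P t).IsSymm)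
    (hP : ∀ t : ℝ, 0 ≤ t → ∀ i j,
      HasDerivAt (fun s => P s i j)
        ((X t * P t + P t * (X t)ᵀ - P t * (R t)⁻¹ * P t +
          ε • (1 : Matrix (Fin 4) (Fin 4) ℝ)) i j) t)
    (hP0 : (P 0).PosSemidef) :
    ∀ t : ℝ, 0 < t → (P t).PosDef := by
  intro t ht
  have hR : ∀ s, 0 ≤ s → (R s).PosDef := fun s hs => .of_posSemidef_sub_smul_one hr (hRlb s hs)
  set A := fun s => X s - (2⁻¹ : ℝ) • (P s * (R s)⁻¹)
  have hA : ∀ s, 0 ≤ s → ContinuousAt A s := by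
    intro s hs
    have hPs : ContinuousAt P s :=
      continuousAt_pi.2 fun i => continuousAt_pi.2 fun j => (hP s hs i j).continuousAt
    have hRinv : ContinuousAt (fun u => (R u)⁻¹) s := by
      refine (continuousAt_matrix_inv _ ?_).comp (continuous_matrix hRcont).continuousAt
      rw [Ring.inverse_eq_inv']
      exact continuousAt_inv₀ (hR s hs).det_pos.ne'
    exact (continuous_matrix hXcont).continuousAt.sub ((hPs.fun_mul hRinv).fun_const_smul _)
  refine .of_hasDerivWithinAt_lyapunov ht (fun s hs => (hA s hs.1).continuousWithinAt)
    (Q := fun _ => ε • 1) (fun s hs i j => ?_) (fun _ _ => PosDef.one.smul hε) hP0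
    (isHermitian_iff_isSymm.2 (hPsymm t ht.le))
  rw [← riccati_eq_lyapunov (hPsymm s hs.1)
    (isHermitian_iff_isSymm.1 (hR s hs.1).isHermitian).inv]
  exact (hP s hs.1 i j).hasDerivWithinAt

theorem stmt17 (X : ℝ → Matrix (Fin 4) (Fin 4) ℝ) (R : ℝ → Matrix (Fin 4) (Fin 4) ℝ)
    (P : ℝ → Matrix (Fin 4) (Fin 4) ℝ) (r ε : ℝ) (hr : 0 < r) (hε : 0 < ε)
    (hXcont : ∀ i j, Continuous fun t => X t i j)
    (hXbdd : ∃ B : ℝ, ∀ (t : ℝ) (i j : Fin 4), |X t i j| ≤ B)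
    (hRcont : ∀ i j, Continuous fun t => R t i j)
    (hRlb : ∀ t : ℝ, 0 ≤ t → (R t - r • (1 : Matrix (Fin 4) (Fin 4) ℝ)).PosSemidef)
    (hPsymm : ∀ t : ℝ, 0 ≤ t → (P t).IsSymm)
    (hP : ∀ t : ℝ, 0 ≤ t → ∀ i j,
      HasDerivAt (fun s => P s i j)
        ((X t * P t + P t * (X t)ᵀ - P t * (R t)⁻¹ * P t +
          ε • (1 : Matrix (Fin 4) (Fin 4) ℝ)) i j) t)
    (hP0 : (P 0).PosSemidef) :
    ∀ t : ℝ, 0 < t → (P t).PosDef :=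
  stmt17_general X R P r ε hr hε hXcont hRcont hRlb hPsymm hP hP0
end
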